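/- arXiv:2508.06748 — 2 statements merged into one kernel-verified Lean document; each statement's English description precedes it below -/
import Mathlib

section
/- The function f₋ is strictly concave on the interval (−1,1); equivalently, its second derivative satisfies f₋''(t) < 0 for all t ∈ (−1,1). -/
open Real Set Filter Topology MeasureTheory intervalIntegral

/-- The standard Gaussian CDF. -/
noncomputable def Phi (x : ℝ) : ℝ := ∫ u in Set.Iic x, Real.exp (-u ^ 2 / 2) / Real.sqrt (2 * Real.pi)

/-- The smooth extension of `ln(1+t)/(t(2+t))` on `(−1,1)`, with `α(0) = 1/2`. -/
noncomputable def alphaFn (t : ℝ) : ℝ :=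
  if t = 0 then 1 / 2 else Real.log (1 + t) / (t * (2 + t))

/-- `x₋(t) = −(1+t)·√(2α(t))`. -/
noncomputable def xMinus (t : ℝ) : ℝ := -(1 + t) * Real.sqrt (2 * alphaFn t)

/-- `x₊(t) = (1−t)·√(2α(−t))`. -/
noncomputable def xPlus (t : ℝ) : ℝ := (1 - t) * Real.sqrt (2 * alphaFn (-t))

/-- `f₋(t) = Φ(x₋(t)/(1+t)) − Φ(x₋(t))`. -/
noncomputable def fMinus (t : ℝ) : ℝ := Phi (xMinus t / (1 + t)) - Phi (xMinus t)

/-- `f₊(t) = Φ(x₊(t)/(1−t)) − Φ(x₊(t))`. -/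
noncomputable def fPlus (t : ℝ) : ℝ := Phi (xPlus t / (1 - t)) - Phi (xPlus t)

noncomputable def alphaD (t : ℝ) : ℝ :=
  if t = 0 then -1/2 else ((t*(2+t))/(1+t) - 2*(1+t)*Real.log (1+t))/(t*(2+t))^2

noncomputable def gaussD (x : ℝ) : ℝ := Real.exp (-x ^ 2 / 2) / Real.sqrt (2 * Real.pi)

lemma gaussD_pos (x : ℝ) : 0 < gaussD x := by
  unfold gaussD; positivity

lemma continuous_gaussD : Continuous gaussD := by
  unfold gaussD; fun_prop

lemma integrable_gaussD : MeasureTheory.Integrable gaussD := by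
  have h : gaussD = fun x => Real.exp (-(1/2) * x ^ 2) * (Real.sqrt (2*Real.pi))⁻¹ := by
    funext x; unfold gaussD; rw [div_eq_mul_inv]; ring_nf
  rw [h]
  exact (integrable_exp_neg_mul_sq (by norm_num)).mul_const _

lemma Phi_eq (x : ℝ) : Phi x = Phi 0 + ∫ u in (0:ℝ)..x, gaussD u := by
  have : ((∫ u in Set.Iic x, gaussD u) - ∫ u in Set.Iic (0:ℝ), gaussD u) = ∫ u in (0:ℝ)..x, gaussD u :=
    integral_Iic_sub_Iic integrable_gaussD.integrableOn integrable_gaussD.integrableOn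
  have hP : ∀ y : ℝ, Phi y = ∫ u in Set.Iic y, gaussD u := fun y => rfl
  rw [hP, hP, ← this]; ring

lemma hasDerivAt_Phi (x : ℝ) : HasDerivAt Phi (gaussD x) x := by
  have h : HasDerivAt (fun y => Phi 0 + ∫ u in (0:ℝ)..y, gaussD u) (gaussD x) x := by
    refine HasDerivAt.const_add _ ?_
    exact integral_hasDerivAt_right integrable_gaussD.intervalIntegrable
      continuous_gaussD.stronglyMeasurable.stronglyMeasurableAtFilter
      continuous_gaussD.continuousAt
  have : Phi = fun y => Phi 0 + ∫ u in (0:ℝ)..y, gaussD u := funext Phi_eq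
  rw [this]; exact h

lemma alphaFn_pos {t : ℝ} (h1 : -1 < t) (h2 : t < 1) : 0 < alphaFn t := by
  unfold alphaFn
  rcases eq_or_ne t 0 with rfl | ht
  · norm_num
  · rw [if_neg ht]
    rcases lt_or_gt_of_ne ht with hlt | hgt
    · have hL : Real.log (1+t) < 0 := Real.log_neg (by linarith) (by linarith)
      have hq : t * (2+t) < 0 := mul_neg_of_neg_of_pos hlt (by linarith)
      exact div_pos_of_neg_of_neg hL hq
    · have hL : 0 < Real.log (1+t) := Real.log_pos (by linarith)
      have hq : 0 < t * (2+t) := mul_pos hgt (by linarith)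
      exact div_pos hL hq

lemma alphaFn_mul {t : ℝ} (h1 : -1 < t) (ht : t ≠ 0) : alphaFn t * (t*(2+t)) = Real.log (1+t) := by
  unfold alphaFn
  rw [if_neg ht, div_mul_cancel₀]
  exact mul_ne_zero ht (by linarith)

lemma hasDerivAt_alphaFn_zero : HasDerivAt alphaFn (-(1:ℝ)/2) 0 := by
  rw [hasDerivAt_iff_tendsto_slope]
  have key : ∀ x : ℝ, x ≠ 0 → |x| ≤ 1/2 → |slope alphaFn 0 x - (-1/2)| ≤ 5/3 * |x| := by
    intro x hx hx2
    obtain ⟨hxl, hxr⟩ := abs_le.mp hx2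
    have h1 : (0:ℝ) < 1 + x := by linarith
    have h2 : (0:ℝ) < 2 + x := by linarith
    have hE : |Real.log (1+x) - x + x^2/2| ≤ 2*|x|^3 := by
      have h := Real.abs_log_sub_add_sum_range_le (x := -x)
        (by rw [abs_neg]; linarith [abs_le.mpr ⟨hxl, hxr⟩] : |(-x)| < 1) 2
      simp only [Finset.sum_range_succ, Finset.sum_range_zero] at h
      norm_num at h
      rw [show -x + x^2/2 + Real.log (1+x) = Real.log (1+x) - x + x^2/2 by ring] at h
      have : |x|^3/(1-|x|) ≤ |x|^3/(1/2) :=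
        div_le_div_of_nonneg_left (by positivity) (by norm_num) (by linarith)
      calc |Real.log (1+x) - x + x^2/2| ≤ |x|^3/(1-|x|) := h
        _ ≤ |x|^3/(1/2) := this
        _ = 2*|x|^3 := by ring
    have heq : slope alphaFn 0 x - (-1/2)
        = (2*(Real.log (1+x) - x + x^2/2) + x^3) / (2*x^2*(2+x)) := by
      rw [slope_def_field]
      unfold alphaFn
      rw [if_neg hx, if_pos rfl]
      field_simp
      ring
    rw [heq, abs_div]
    have hnum : |2*(Real.log (1+x) - x + x^2/2) + x^3| ≤ 5*|x|^3 := by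
      calc |2*(Real.log (1+x) - x + x^2/2) + x^3| ≤ |2*(Real.log (1+x) - x + x^2/2)| + |x^3| :=
            abs_add_le _ _
        _ = 2*|Real.log (1+x) - x + x^2/2| + |x|^3 := by rw [abs_mul, abs_pow]; norm_num
        _ ≤ 2*(2*|x|^3) + |x|^3 := by linarith
        _ = 5*|x|^3 := by ring
    have hden : (3:ℝ)*x^2 ≤ |2*x^2*(2+x)| := by
      rw [abs_of_pos (by positivity)]
      nlinarith [sq_nonneg x]
    have hx2pos : (0:ℝ) < 3*x^2 := by positivity
    calc |2*(Real.log (1+x) - x + x^2/2) + x^3| / |2*x^2*(2+x)|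
        ≤ 5*|x|^3 / (3*x^2) := div_le_div₀ (by positivity) hnum hx2pos hden
      _ = 5/3*|x| := by
          have h3 : |x|^3 = |x| * x^2 := by
            rw [← sq_abs]; ring
          rw [h3]; field_simp
  have hub : Tendsto (fun x : ℝ => 5/3*|x|) (𝓝[≠] (0:ℝ)) (𝓝 0) := by
    have : Tendsto (fun x : ℝ => 5/3*|x|) (𝓝 (0:ℝ)) (𝓝 (5/3*|(0:ℝ)|)) :=
      (continuous_const.mul continuous_abs).tendsto 0
    simpa using this.mono_left nhdsWithin_le_nhds
  rw [tendsto_iff_dist_tendsto_zero]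
  refine squeeze_zero' (Filter.Eventually.of_forall fun x => dist_nonneg) ?_ hub
  · have hmem : ∀ᶠ x : ℝ in 𝓝[≠] (0:ℝ), x ≠ 0 :=
      eventually_mem_nhdsWithin.mono fun x hx => hx
    have hsmall : ∀ᶠ x : ℝ in 𝓝[≠] (0:ℝ), |x| ≤ 1/2 := by
      have : ∀ᶠ x : ℝ in 𝓝 (0:ℝ), |x| ≤ 1/2 := by
        filter_upwards [Metric.ball_mem_nhds (0:ℝ) (by norm_num : (0:ℝ) < 1/2)] with x hx
        rw [Metric.mem_ball, Real.dist_eq, sub_zero] at hx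
        linarith
      exact this.filter_mono nhdsWithin_le_nhds
    filter_upwards [hmem, hsmall] with x hx hx2
    rw [Real.dist_eq]
    exact key x hx hx2

lemma hasDerivAt_alphaFn {t : ℝ} (h1 : -1 < t) (h2 : t < 1) :
    HasDerivAt alphaFn (alphaD t) t := by
  rcases eq_or_ne t 0 with rfl | ht
  · simpa [alphaD] using hasDerivAt_alphaFn_zero
  · have hs : (0:ℝ) < 1 + t := by linarith
    have hq : t * (2+t) ≠ 0 := mul_ne_zero ht (by linarith)
    have hlog : HasDerivAt (fun u : ℝ => Real.log (1+u)) (1/(1+t)) t := by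
      have h := (Real.hasDerivAt_log (ne_of_gt hs)).comp t ((hasDerivAt_id t).const_add 1)
      exact h.congr_deriv (by simp)
    have hqd : HasDerivAt (fun u : ℝ => u*(2+u)) (1*(2+t) + t*1) t :=
      (hasDerivAt_id t).mul ((hasDerivAt_id t).const_add 2)
    have hdiv := hlog.div hqd hq
    have heq : alphaD t = (1/(1+t)*(t*(2+t)) - Real.log (1+t)*(1*(2+t)+t*1))/(t*(2+t))^2 := by
      rw [alphaD, if_neg ht]
      field_simp
      ring_nf
    rw [heq]
    refine hdiv.congr_of_eventuallyEq ?_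
    filter_upwards [isOpen_compl_singleton.mem_nhds (by simpa using ht)] with u hu
    have hu' : u ≠ 0 := hu
    simp only [alphaFn, if_neg hu']
    rfl

lemma key_ineq {t : ℝ} (h1 : -1 < t) (h2 : t < 1) :
    alphaD t * (1 - 2*alphaFn t) < 2*alphaFn t / (1+t) := by
  rcases eq_or_ne t 0 with rfl | ht
  · norm_num [alphaD, alphaFn]
  have hs0 : (0:ℝ) < 1 + t := by linarith
  have h2t : (0:ℝ) < 2 + t := by linarith
  have hsne : (1:ℝ) + t ≠ 1 := fun h => ht (by linarith)
  have hqne : t*(2+t) ≠ 0 := mul_ne_zero ht (by linarith)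
  set L := Real.log (1+t) with hLdef
  have hL1 : L < t := by
    have := Real.log_lt_sub_one_of_pos hs0 hsne; linarith
  have hL2 : t < (1+t) * L := by
    have hinv0 : (0:ℝ) < (1+t)⁻¹ := by positivity
    have hinvne : ((1:ℝ)+t)⁻¹ ≠ 1 := by
      intro h
      apply hsne
      have : (1+t) * (1+t)⁻¹ = (1+t) * 1 := by rw [h]
      rw [mul_inv_cancel₀ (ne_of_gt hs0), mul_one] at this
      linarith
    have h' := Real.log_lt_sub_one_of_pos hinv0 hinvne
    rw [Real.log_inv] at h'
    have hgt : 1 - (1+t)⁻¹ < L := by linarith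
    have hmul := mul_lt_mul_of_pos_left hgt hs0
    have hinv : (1+t) * (1+t)⁻¹ = 1 := mul_inv_cancel₀ (ne_of_gt hs0)
    nlinarith [hmul, hinv]
  have hrw : alphaD t * (1 - 2*alphaFn t) - 2*alphaFn t/(1+t)
      = ((t*(2+t) - 2*(1+t)^2*L)*(t*(2+t) - 2*L) - 2*L*(t*(2+t))^2)
        / ((1+t)*(t*(2+t))^3) := by
    rw [alphaD, alphaFn, if_neg ht, if_neg ht, ← hLdef]
    field_simp
  have hid : (t*(2+t) - 2*(1+t)^2*L)*(t*(2+t) - 2*L) - 2*L*(t*(2+t))^2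
      = (t*(2+t) - 2*(1+t)*L)^2 - 4*(1+t)*(t*(2+t))*t*L := by ring
  rcases lt_or_gt_of_ne ht with hneg | hpos
  · -- t < 0 : numerator positive, denominator negative
    have hLneg : L < 0 := Real.log_neg (by linarith) (by linarith)
    have hqneg : t*(2+t) < 0 := mul_neg_of_neg_of_pos hneg h2t
    have hterm : 4*(1+t)*(t*(2+t))*t*L < 0 := by
      have h1' : t*(2+t)*t > 0 := mul_pos_of_neg_of_neg hqneg hneg
      nlinarith [mul_pos hs0 h1', hLneg]
    have hNum : 0 < (t*(2+t) - 2*(1+t)^2*L)*(t*(2+t) - 2*L) - 2*L*(t*(2+t))^2 := by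
      rw [hid]
      nlinarith [sq_nonneg (t*(2+t) - 2*(1+t)*L)]
    have hq3 : (t*(2+t))^3 < 0 := by
      have he : (t*(2+t))^3 = (t*(2+t))^2 * (t*(2+t)) := by ring
      rw [he]
      exact mul_neg_of_pos_of_neg (by positivity) hqneg
    have hDen : (1+t)*(t*(2+t))^3 < 0 := mul_neg_of_pos_of_neg hs0 hq3
    have hfr := div_neg_of_pos_of_neg hNum hDen
    rw [← hrw] at hfr
    linarith
  · -- t > 0
    have hLpos : 0 < L := Real.log_pos (by linarith)
    have hqpos : 0 < t*(2+t) := mul_pos hpos h2t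
    have hA1 : t*(2+t) - 2*(1+t)*L < t^2 := by nlinarith [hL2]
    have hA2 : -(t^2) < t*(2+t) - 2*(1+t)*L := by nlinarith [hL1, hs0]
    have hsq : (t*(2+t) - 2*(1+t)*L)^2 < t^4 := by nlinarith [hA1, hA2]
    have hRHS : t^4 < 4*(1+t)*(t*(2+t))*t*L := by nlinarith [hL2, hpos, h2t]
    have hNum : (t*(2+t) - 2*(1+t)^2*L)*(t*(2+t) - 2*L) - 2*L*(t*(2+t))^2 < 0 := by
      rw [hid]; linarith
    have hDen : 0 < (1+t)*(t*(2+t))^3 := by positivity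
    have hfr := div_neg_of_neg_of_pos hNum hDen
    rw [← hrw] at hfr
    linarith

noncomputable def GFn (t : ℝ) : ℝ :=
  Real.exp (-alphaFn t) * Real.sqrt (2*alphaFn t) / ((1+t) * Real.sqrt (2*Real.pi))

lemma alphaFn_mul' {t : ℝ} (h1 : -1 < t) : alphaFn t * (t*(2+t)) = Real.log (1+t) := by
  rcases eq_or_ne t 0 with rfl | ht
  · simp
  · exact alphaFn_mul h1 ht

lemma hasDerivAt_sqrtAlpha {t : ℝ} (h1 : -1 < t) (h2 : t < 1) :
    HasDerivAt (fun u => Real.sqrt (2*alphaFn u)) (alphaD t / Real.sqrt (2*alphaFn t)) t := by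
  have ha := hasDerivAt_alphaFn h1 h2
  have hα := alphaFn_pos h1 h2
  have h2α : 2*alphaFn t ≠ 0 := by positivity
  have hgpos : 0 < Real.sqrt (2*alphaFn t) := Real.sqrt_pos.mpr (by linarith)
  have h := (Real.hasDerivAt_sqrt h2α).comp t (ha.const_mul 2)
  refine h.congr_deriv (Eq.symm ?_)
  rw [one_div]
  field_simp

lemma hasDerivAt_fMinus {t : ℝ} (h1 : -1 < t) (h2 : t < 1) :
    HasDerivAt fMinus (GFn t) t := by
  have hs0 : (0:ℝ) < 1 + t := by linarith
  have hα := alphaFn_pos h1 h2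
  have hg := hasDerivAt_sqrtAlpha h1 h2
  set g := Real.sqrt (2*alphaFn t) with hgdef
  have hgpos : 0 < g := Real.sqrt_pos.mpr (by linarith)
  have hgsq : g^2 = 2*alphaFn t := Real.sq_sqrt (by linarith)
  have hx : HasDerivAt xMinus (-1*g + -(1+t)*(alphaD t / g)) t := by
    have hc : HasDerivAt (fun u : ℝ => -(1+u)) (-1) t := ((hasDerivAt_id t).const_add 1).neg
    exact hc.mul hg
  have h₁ : HasDerivAt (fun u => Phi (-Real.sqrt (2*alphaFn u)))
      (gaussD (-g) * -(alphaD t / g)) t := (hasDerivAt_Phi (-g)).comp (h := fun u => -Real.sqrt (2*alphaFn u)) t hg.neg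
  have h₂ : HasDerivAt (fun u => Phi (xMinus u))
      (gaussD (xMinus t) * (-1*g + -(1+t)*(alphaD t / g))) t := (hasDerivAt_Phi _).comp t hx
  have hev : fMinus =ᶠ[𝓝 t] fun u => Phi (-Real.sqrt (2*alphaFn u)) - Phi (xMinus u) := by
    filter_upwards [isOpen_Ioo.mem_nhds (show t ∈ Ioo (-1:ℝ) 1 from ⟨h1, h2⟩)] with u hu
    have hu0 : (0:ℝ) < 1 + u := by linarith [hu.1]
    have harg : xMinus u / (1 + u) = -Real.sqrt (2*alphaFn u) := by
      unfold xMinus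
      rw [show -(1+u) * Real.sqrt (2*alphaFn u) / (1+u)
          = -((1+u)/(1+u) * Real.sqrt (2*alphaFn u)) by ring,
        div_self (ne_of_gt hu0), one_mul]
    unfold fMinus
    rw [harg]
  have hD := (h₁.sub h₂).congr_of_eventuallyEq hev
  have e1 : gaussD (-g) = Real.exp (-alphaFn t) / Real.sqrt (2*Real.pi) := by
    unfold gaussD
    rw [neg_pow, show ((-1:ℝ))^2 = 1 by norm_num, one_mul, hgsq,
      show -(2*alphaFn t)/2 = -alphaFn t by ring]
  have e2 : gaussD (xMinus t) = Real.exp (-alphaFn t) / ((1+t) * Real.sqrt (2*Real.pi)) := by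
    unfold gaussD xMinus
    rw [← hgdef]
    have hexp : (-(1+t)*g)^2/2 = alphaFn t + Real.log (1+t) := by
      have hgg : (-(1+t)*g)^2 = (1+t)^2*g^2 := by ring
      rw [hgg, hgsq]
      linear_combination alphaFn_mul' h1
    rw [show -(-(1+t)*g)^2/2 = -((-(1+t)*g)^2/2) by ring, hexp,
      show -(alphaFn t + Real.log (1+t)) = -alphaFn t + -Real.log (1+t) by ring,
      Real.exp_add, Real.exp_neg, Real.exp_neg, Real.exp_log hs0]
    field_simp
  refine hD.congr_deriv (Eq.symm ?_)
  rw [e1, e2]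
  unfold GFn
  rw [← hgdef]
  have hc : (0:ℝ) < Real.sqrt (2*Real.pi) := Real.sqrt_pos.mpr (by positivity)
  field_simp
  ring

lemma deriv2_neg {t : ℝ} (h1 : -1 < t) (h2 : t < 1) : deriv GFn t < 0 := by
  have hs0 : (0:ℝ) < 1 + t := by linarith
  have hα := alphaFn_pos h1 h2
  have ha := hasDerivAt_alphaFn h1 h2
  have hg := hasDerivAt_sqrtAlpha h1 h2
  set g := Real.sqrt (2*alphaFn t) with hgdef
  have hgpos : 0 < g := Real.sqrt_pos.mpr (by linarith)
  have hgsq : g^2 = 2*alphaFn t := Real.sq_sqrt (by linarith)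
  have hc : (0:ℝ) < Real.sqrt (2*Real.pi) := Real.sqrt_pos.mpr (by positivity)
  set c := Real.sqrt (2*Real.pi) with hcdef
  set a := alphaD t with hadef
  -- derivative of numerator
  have hE : HasDerivAt (fun u => Real.exp (-alphaFn u)) (Real.exp (-alphaFn t) * -a) t :=
    ha.neg.exp
  have hN : HasDerivAt (fun u => Real.exp (-alphaFn u) * Real.sqrt (2*alphaFn u))
      (Real.exp (-alphaFn t) * -a * g + Real.exp (-alphaFn t) * (a/g)) t := hE.mul hg
  have hDen : HasDerivAt (fun u : ℝ => (1+u)*c) (1*c) t :=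
    ((hasDerivAt_id t).const_add 1).mul_const c
  have hdne : (1+t)*c ≠ 0 := by positivity
  have hG : HasDerivAt GFn
      (((Real.exp (-alphaFn t) * -a * g + Real.exp (-alphaFn t) * (a/g)) * ((1+t)*c)
        - (Real.exp (-alphaFn t) * g) * (1*c)) / ((1+t)*c)^2) t := by
    have := hN.div hDen hdne
    exact this
  rw [hG.deriv]
  apply div_neg_of_neg_of_pos
  · have hkey := key_ineq h1 h2
    have hkey' : a * (1 - 2*alphaFn t) * (1+t) < 2*alphaFn t := by
      rw [← hadef] at hkey
      calc a * (1 - 2*alphaFn t) * (1+t) < (2*alphaFn t/(1+t)) * (1+t) :=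
            mul_lt_mul_of_pos_right hkey hs0
        _ = 2*alphaFn t := by field_simp
    have hmain : (Real.exp (-alphaFn t) * -a * g + Real.exp (-alphaFn t) * (a/g)) * ((1+t)*c)
        - (Real.exp (-alphaFn t) * g) * (1*c)
        = c * Real.exp (-alphaFn t) * ((a * (1 - 2*alphaFn t) * (1+t) - 2*alphaFn t)/g) := by
      rw [← hgsq]
      field_simp
      ring
    rw [hmain]
    apply mul_neg_of_pos_of_neg (by positivity)
    apply div_neg_of_neg_of_pos _ hgpos
    linarith
  · positivity

theorem fMinus_strictConcave : StrictConcaveOn ℝ (Set.Ioo (-1 : ℝ) 1) fMinus := by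
  apply strictConcaveOn_of_deriv2_neg (convex_Ioo _ _)
  · intro x hx
    exact (hasDerivAt_fMinus hx.1 hx.2).continuousAt.continuousWithinAt
  · intro x hx
    rw [interior_Ioo] at hx
    have hev : deriv fMinus =ᶠ[𝓝 x] GFn := by
      filter_upwards [isOpen_Ioo.mem_nhds hx] with u hu
      exact (hasDerivAt_fMinus hu.1 hu.2).deriv
    have : deriv (deriv fMinus) x = deriv GFn x := hev.deriv_eq
    simp only [Function.iterate_succ, Function.iterate_zero, Function.comp_apply, id_eq]
    rw [this]
    exact deriv2_neg hx.1 hx.2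
end

section
/- The derivatives of f₋ and f₊ at the origin coincide and equal 1/√(2πe): f₋'(0) = f₊'(0) = 1/√(2πe). -/
open Real Set

-- Integrability of the Gaussian density
lemma gauss_integrable :
    MeasureTheory.Integrable (fun u : ℝ => Real.exp (-u ^ 2 / 2) / Real.sqrt (2 * Real.pi)) := by
  have h : MeasureTheory.Integrable (fun u : ℝ => Real.exp (-(1/2 : ℝ) * u ^ 2)) :=
    integrable_exp_neg_mul_sq (by norm_num)
  have : (fun u : ℝ => Real.exp (-u ^ 2 / 2) / Real.sqrt (2 * Real.pi))
      = fun u => Real.exp (-(1/2 : ℝ) * u ^ 2) / Real.sqrt (2 * Real.pi) := by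
    funext u; ring_nf
  rw [this]
  exact h.div_const _

lemma gauss_continuous :
    Continuous (fun u : ℝ => Real.exp (-u ^ 2 / 2) / Real.sqrt (2 * Real.pi)) := by
  continuity

lemma hasDerivAt_Phi_s17 (x : ℝ) :
    HasDerivAt Phi (Real.exp (-x ^ 2 / 2) / Real.sqrt (2 * Real.pi)) x := by
  set f : ℝ → ℝ := fun u => Real.exp (-u ^ 2 / 2) / Real.sqrt (2 * Real.pi) with hf
  have hint := gauss_integrable
  have key : ∀ y : ℝ, Phi y = Phi 0 + ∫ u in (0:ℝ)..y, f u := by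
    intro y
    have := intervalIntegral.integral_Iic_sub_Iic (μ := MeasureTheory.volume)
      (f := f) (a := (0:ℝ)) (b := y) hint.integrableOn hint.integrableOn
    unfold Phi
    linarith [this]
  have hd : HasDerivAt (fun y : ℝ => Phi 0 + ∫ u in (0:ℝ)..y, f u) (f x) x := by
    refine HasDerivAt.const_add _ ?_
    exact intervalIntegral.integral_hasDerivAt_right hint.intervalIntegrable
      gauss_continuous.aestronglyMeasurable.stronglyMeasurableAtFilter
      gauss_continuous.continuousAt
  have : (fun y : ℝ => Phi 0 + ∫ u in (0:ℝ)..y, f u) = Phi := by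
    funext y; rw [key y]
  rwa [this] at hd

lemma alphaFn_zero : alphaFn 0 = 1 / 2 := by simp [alphaFn]

lemma hasDerivAt_alphaFn_s17 : HasDerivAt alphaFn (-(1/2) : ℝ) 0 := by
  rw [hasDerivAt_iff_tendsto_slope]
  -- N t / t^2 → -1
  have hN : Filter.Tendsto (fun t : ℝ => (Real.log (1 + t) - t - t ^ 2 / 2) / t ^ 2)
      (nhdsWithin 0 {(0:ℝ)}ᶜ) (nhds (-1)) := by
    apply HasDerivAt.lhopital_zero_nhdsNE
      (f' := fun t : ℝ => (1 + t)⁻¹ - 1 - t) (g' := fun t : ℝ => 2 * t)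
    · filter_upwards [eventually_nhdsWithin_of_eventually_nhds
        (Filter.Tendsto.eventually_const_lt (by norm_num : (0:ℝ) < 1)
          (by simpa using (continuous_add_left (1:ℝ)).tendsto (0:ℝ)))] with t ht
      have h1 : HasDerivAt (fun t : ℝ => Real.log (1 + t)) ((1+t)⁻¹) t := by
        have := ((hasDerivAt_id t).const_add 1).log (by simp only [id]; intro h; linarith)
        simpa using this
      have h2 : HasDerivAt (fun t : ℝ => t ^ 2 / 2) t t := by
        have := (hasDerivAt_pow 2 t).div_const 2
        simpa using this
      exact (h1.sub (hasDerivAt_id t)).sub h2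
    · filter_upwards with t
      have := hasDerivAt_pow 2 t
      simpa using this
    · filter_upwards [self_mem_nhdsWithin] with t (ht : t ≠ 0)
      simpa using ht
    · have hc : ContinuousAt (fun t : ℝ => Real.log (1 + t) - t - t ^ 2 / 2) 0 := by
        apply ContinuousAt.sub
        apply ContinuousAt.sub
        · exact (Real.continuousAt_log (by norm_num)).comp (by fun_prop)
        · fun_prop
        · fun_prop
      have := hc.tendsto.mono_left (nhdsWithin_le_nhds (s := {(0:ℝ)}ᶜ))
      simpa using this
    · have := (continuous_pow 2).tendsto (0:ℝ)
      simpa using this.mono_left nhdsWithin_le_nhds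
    · -- ((1+t)⁻¹ - 1 - t)/(2t) = -(2+t)/(2(1+t)) eventually
      have hc : ContinuousAt (fun t : ℝ => -(2 + t) / (2 * (1 + t))) 0 := by
        apply ContinuousAt.div (by fun_prop) (by fun_prop) (by norm_num)
      have hlim : Filter.Tendsto (fun t : ℝ => -(2 + t) / (2 * (1 + t)))
          (nhdsWithin 0 {(0:ℝ)}ᶜ) (nhds (-1)) := by
        have := hc.tendsto.mono_left (nhdsWithin_le_nhds (s := {(0:ℝ)}ᶜ))
        norm_num at this
        convert this using 2
        norm_num
      refine hlim.congr' ?_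
      filter_upwards [self_mem_nhdsWithin, eventually_nhdsWithin_of_eventually_nhds
        (Filter.Tendsto.eventually_const_lt (by norm_num : (0:ℝ) < 1)
          (by simpa using (continuous_add_left (1:ℝ)).tendsto (0:ℝ)))]
        with t (ht : t ≠ 0) h1t
      field_simp
      ring
  -- combine
  have h2 : Filter.Tendsto (fun t : ℝ => (2 + t)⁻¹) (nhdsWithin 0 {(0:ℝ)}ᶜ) (nhds (1/2)) := by
    have hc : ContinuousAt (fun t : ℝ => (2 + t)⁻¹) 0 :=
      ContinuousAt.inv₀ (by fun_prop) (by norm_num)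
    have := hc.tendsto.mono_left (nhdsWithin_le_nhds (s := {(0:ℝ)}ᶜ))
    norm_num at this
    simpa using this
  have hmul := hN.mul h2
  norm_num at hmul
  refine Filter.Tendsto.congr' ?_ hmul
  filter_upwards [self_mem_nhdsWithin, eventually_nhdsWithin_of_eventually_nhds
    (Filter.Tendsto.eventually_const_lt (by norm_num : (0:ℝ) < 1)
      (by simpa using (continuous_add_left (1:ℝ)).tendsto (0:ℝ)))]
    with t (ht : t ≠ 0) h1t
  have h2t : (0:ℝ) < 2 + t := by linarith
  simp only [slope_def_field, alphaFn, ht, if_neg ht, alphaFn_zero, sub_zero, ↓reduceIte]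
  field_simp
  ring



lemma two_alpha_zero : 2 * alphaFn 0 = 1 := by rw [alphaFn_zero]; norm_num

lemma hasDerivAt_sqrt2alpha : HasDerivAt (fun t => Real.sqrt (2 * alphaFn t)) (-(1/2)) 0 := by
  have hin : HasDerivAt (fun t => 2 * alphaFn t) (-1) 0 := by
    have := hasDerivAt_alphaFn_s17.const_mul 2
    refine this.congr_deriv ?_; ring
  have := hin.sqrt (by rw [two_alpha_zero]; norm_num)
  convert this using 1
  rw [two_alpha_zero, Real.sqrt_one]; norm_num

lemma hasDerivAt_sqrt2alpha_neg :
    HasDerivAt (fun t => Real.sqrt (2 * alphaFn (-t))) (1/2) 0 := by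
  have hs : HasDerivAt (fun t => Real.sqrt (2 * alphaFn t)) (-(1/2)) (-0 : ℝ) := by
    simpa using hasDerivAt_sqrt2alpha
  have h := hs.comp 0 (hasDerivAt_neg 0)
  have e : (fun t : ℝ => Real.sqrt (2 * alphaFn (-t)))
      = (fun t => Real.sqrt (2 * alphaFn t)) ∘ (fun t : ℝ => -t) := rfl
  rw [e]
  refine h.congr_deriv ?_
  norm_num

lemma xMinus_zero : xMinus 0 = -1 := by
  simp [xMinus, two_alpha_zero, alphaFn_zero]

lemma xPlus_zero : xPlus 0 = 1 := by
  simp [xPlus, alphaFn_zero]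

lemma hasDerivAt_xMinus : HasDerivAt xMinus (-(1/2)) 0 := by
  have h1 : HasDerivAt (fun t : ℝ => -(1 + t)) (-1) 0 := ((hasDerivAt_id 0).const_add 1).neg
  have := h1.mul hasDerivAt_sqrt2alpha
  refine this.congr_deriv ?_
  rw [two_alpha_zero, Real.sqrt_one]; norm_num

lemma hasDerivAt_xPlus : HasDerivAt xPlus (-(1/2)) 0 := by
  have h1 : HasDerivAt (fun t : ℝ => 1 - t) (-1) 0 := by
    simpa using (hasDerivAt_id 0).const_sub 1
  have := h1.mul hasDerivAt_sqrt2alpha_neg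
  refine this.congr_deriv ?_
  rw [neg_zero, two_alpha_zero, Real.sqrt_one]; norm_num

lemma hasDerivAt_qMinus : HasDerivAt (fun t => xMinus t / (1 + t)) (1/2) 0 := by
  have hden : HasDerivAt (fun t : ℝ => 1 + t) 1 0 := (hasDerivAt_id 0).const_add 1
  have := hasDerivAt_xMinus.div hden (by norm_num)
  refine this.congr_deriv ?_
  rw [xMinus_zero]; norm_num

lemma hasDerivAt_qPlus : HasDerivAt (fun t => xPlus t / (1 - t)) (1/2) 0 := by
  have hden : HasDerivAt (fun t : ℝ => 1 - t) (-1) 0 := by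
    simpa using (hasDerivAt_id 0).const_sub 1
  have := hasDerivAt_xPlus.div hden (by norm_num)
  refine this.congr_deriv ?_
  rw [xPlus_zero]; norm_num

lemma val_eq : Real.exp (-(1:ℝ) / 2) / Real.sqrt (2 * Real.pi)
    = 1 / Real.sqrt (2 * Real.pi * Real.exp 1) := by
  rw [Real.sqrt_mul (by positivity : (0:ℝ) ≤ 2 * Real.pi) (Real.exp 1), ← Real.exp_half,
    show (-(1:ℝ)/2) = -(1/2) by ring, Real.exp_neg]
  have h1 : Real.sqrt (2 * Real.pi) > 0 := by positivity
  have h2 : Real.exp ((1:ℝ)/2) > 0 := Real.exp_pos _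
  field_simp


theorem deriv_at_zero :
    HasDerivAt fMinus (1 / Real.sqrt (2 * Real.pi * Real.exp 1)) 0 ∧
      HasDerivAt fPlus (1 / Real.sqrt (2 * Real.pi * Real.exp 1)) 0 := by
  constructor
  · have hg1 := (hasDerivAt_Phi_s17 ((fun t => xMinus t / (1 + t)) 0)).comp 0 hasDerivAt_qMinus
    have hg2 := (hasDerivAt_Phi_s17 (xMinus 0)).comp 0 hasDerivAt_xMinus
    have h := hg1.sub hg2
    have e : (Phi ∘ fun t => xMinus t / (1 + t)) - Phi ∘ xMinus = fMinus := by
      funext t; simp [fMinus, Function.comp]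
    rw [e] at h
    refine h.congr_deriv ?_
    rw [← val_eq]
    simp only [xMinus_zero]
    norm_num
    ring
  · have hg1 := (hasDerivAt_Phi_s17 ((fun t => xPlus t / (1 - t)) 0)).comp 0 hasDerivAt_qPlus
    have hg2 := (hasDerivAt_Phi_s17 (xPlus 0)).comp 0 hasDerivAt_xPlus
    have h := hg1.sub hg2
    have e : (Phi ∘ fun t => xPlus t / (1 - t)) - Phi ∘ xPlus = fPlus := by
      funext t; simp [fPlus, Function.comp]
    rw [e] at h
    refine h.congr_deriv ?_
    rw [← val_eq]
    simp only [xPlus_zero]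
    norm_num
    ring
end
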